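/- arXiv:2105.14141 — 7 statements merged into one kernel-verified Lean document; each statement's English description precedes it below -/
import Mathlib

section
/- For n ≥ 2, the LOORF estimator equals the average over all ordered pairs of the product-of-differences estimator: (1/(n−1))·Σ_i (f(b_i) − (1/n)·Σ_j f(b_j))·g_i = (1/(n(n−1)))·Σ_{i≠j} (1/2)·(f(b_i) − f(b_j))·(g_i − g_j). -/
open Finset

/-- LOORF equals the average over all ordered pairs of the product-of-differences estimator. -/
theorem stmt_3 (n : ℕ) (hn : 2 ≤ n) (f g : Fin n → ℝ) :
    (1 / (n - 1 : ℝ)) * ∑ i, (f i - (1 / n : ℝ) * ∑ j, f j) * g i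
      = (1 / (n * (n - 1) : ℝ)) *
          ∑ i, ∑ j ∈ Finset.univ.erase i, (1 / 2 : ℝ) * (f i - f j) * (g i - g j) := by
  have hn0 : (n : ℝ) ≠ 0 := by positivity
  have hn1 : (n : ℝ) - 1 ≠ 0 := by
    have : (2 : ℝ) ≤ n := by exact_mod_cast hn
    nlinarith
  have herase : ∀ i : Fin n, ∑ j ∈ Finset.univ.erase i, (1 / 2 : ℝ) * (f i - f j) * (g i - g j)
      = ∑ j, (1 / 2 : ℝ) * (f i - f j) * (g i - g j) := by
    intro i
    apply Finset.sum_erase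
    simp
  simp only [herase]
  have hexp : ∑ i, ∑ j, (1 / 2 : ℝ) * (f i - f j) * (g i - g j)
      = (n : ℝ) * ∑ i, f i * g i - (∑ i, f i) * (∑ i, g i) := by
    have : ∀ i : Fin n, ∑ j, (1 / 2 : ℝ) * (f i - f j) * (g i - g j)
        = (n : ℝ) / 2 * (f i * g i) - (1/2) * f i * (∑ j, g j) - (1/2) * (∑ j, f j) * g i
          + (1/2) * ∑ j, f j * g j := by
      intro i
      rw [Finset.sum_congr rfl (fun j _ => by ring :
        ∀ j ∈ Finset.univ, (1 / 2 : ℝ) * (f i - f j) * (g i - g j)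
          = (1/2) * (f i * g i) - (1/2) * (f i * g j) - (1/2) * (f j * g i) + (1/2) * (f j * g j))]
      simp [Finset.sum_add_distrib, Finset.sum_sub_distrib, ← Finset.mul_sum, Finset.card_univ]
      rw [← Finset.sum_mul]
      ring
    simp only [this]
    simp [Finset.sum_add_distrib, Finset.sum_sub_distrib, ← Finset.sum_mul, ← Finset.mul_sum,
      Finset.card_univ]
    ring
  rw [hexp]
  have hl : ∑ i, (f i - (1 / n : ℝ) * ∑ j, f j) * g i
      = ∑ i, f i * g i - (1 / n : ℝ) * ((∑ i, f i) * ∑ i, g i) := by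
    simp only [sub_mul, Finset.sum_sub_distrib]
    rw [← Finset.mul_sum]
    ring
  rw [hl]
  field_simp
end

section
/- ARTS is unbiased: if (b, b') ~ B₂(σ(φ)) has marginals Bern(σ(φ)) and correlation ρ < 1, then E[(f(b) − f(b'))·(b − b')/(2(1−ρ))] = ∇_φ E_{b~Bern(σ(φ))}[f(b)] = (f(1) − f(0))·σ(φ)(1 − σ(φ)). -/
/-! Since `f b - f b'` vanishes on the diagonal, only the two off-diagonal cells contribute, and the
marginal constraints give each of them mass `p(1-p)(1-ρ)`; the normalisation `2(1-ρ)` cancels this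
exactly, leaving the derivative `(f 1 - f 0) σ'(φ)` of `σ(φ) f 1 + (1 - σ(φ)) f 0`. -/

noncomputable def sigmoid (x : ℝ) : ℝ := 1 / (1 + Real.exp (-x))

lemma sigmoid_pos (x : ℝ) : 0 < sigmoid x := by
  unfold sigmoid
  positivity

lemma sigmoid_lt_one (x : ℝ) : sigmoid x < 1 := by
  unfold sigmoid
  rw [div_lt_one (by positivity)]
  linarith [Real.exp_pos (-x)]

lemma hasDerivAt_sigmoid (x : ℝ) :
    HasDerivAt sigmoid (sigmoid x * (1 - sigmoid x)) x := by
  have hden : HasDerivAt (fun t : ℝ => 1 + Real.exp (-t)) (-Real.exp (-x)) x := by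
    simpa using ((Real.hasDerivAt_exp (-x)).comp x (hasDerivAt_neg x)).const_add 1
  have hne : 1 + Real.exp (-x) ≠ 0 := by positivity
  unfold sigmoid
  simp only [one_div]
  refine (hden.inv hne).congr_deriv ?_
  field_simp
  ring

lemma HasDerivAt.mul_add_one_sub_mul {g : ℝ → ℝ} {g' x : ℝ} (hg : HasDerivAt g g' x) (a b : ℝ) :
    HasDerivAt (fun t => g t * a + (1 - g t) * b) ((a - b) * g') x := by
  refine ((hg.mul_const a).add (((hasDerivAt_const x 1).sub hg).mul_const b)).congr_deriv ?_
  ring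

lemma sum_fin_two_mul_sub_mul_sub (q : Fin 2 → Fin 2 → ℝ) (f : Fin 2 → ℝ) :
    ∑ a, ∑ b, q a b * ((f a - f b) * (((a : ℕ) : ℝ) - ((b : ℕ) : ℝ)))
      = (f 1 - f 0) * (q 1 0 + q 0 1) := by
  simp only [Fin.sum_univ_two, Fin.val_zero, Fin.val_one, Nat.cast_zero, Nat.cast_one]
  ring

/-- For `Bern(p)` marginals with `P(b = 1, b' = 1) = r`, this is `P(b = 1, b' = 0) = p(1-p)(1-ρ)`. -/
lemma mul_one_sub_mul_one_sub_corr {p r : ℝ} (hp0 : p ≠ 0) (hp1 : p ≠ 1) :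
    p * (1 - p) * (1 - (r - p ^ 2) / (p * (1 - p))) = p - r := by
  have : 1 - p ≠ 0 := sub_ne_zero.mpr hp1.symm
  field_simp
  ring

theorem stmt_7_general (φ ρ : ℝ) (f : Fin 2 → ℝ) (q : Fin 2 → Fin 2 → ℝ)
    (hm1 : q 1 0 + q 1 1 = sigmoid φ) (hm2 : q 0 1 + q 1 1 = sigmoid φ)
    (hρ : ρ = (q 1 1 - sigmoid φ ^ 2) / (sigmoid φ * (1 - sigmoid φ)))
    (hρ1 : ρ < 1) :
    (∑ a, ∑ b, q a b *
        ((f a - f b) * (((a : ℕ) : ℝ) - ((b : ℕ) : ℝ)) / (2 * (1 - ρ))))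
      = (f 1 - f 0) * (sigmoid φ * (1 - sigmoid φ))
    ∧ HasDerivAt (fun t : ℝ => sigmoid t * f 1 + (1 - sigmoid t) * f 0)
        ((f 1 - f 0) * (sigmoid φ * (1 - sigmoid φ))) φ := by
  set p := sigmoid φ
  have hoff : p * (1 - p) * (1 - ρ) = p - q 1 1 := by
    rw [hρ]
    exact mul_one_sub_mul_one_sub_corr (sigmoid_pos φ).ne' (sigmoid_lt_one φ).ne
  have hρ1' : 1 - ρ ≠ 0 := sub_ne_zero.mpr hρ1.ne'
  refine ⟨?_, (hasDerivAt_sigmoid φ).mul_add_one_sub_mul (f 1) (f 0)⟩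
  simp only [mul_div_assoc', ← Finset.sum_div, sum_fin_two_mul_sub_mul_sub]
  rw [show q 1 0 + q 0 1 = 2 * (p * (1 - p) * (1 - ρ)) by linarith]
  field_simp

/-- ARTS is unbiased: its expectation is the gradient (f(1) − f(0))·σ(φ)(1 − σ(φ)). -/
theorem stmt_7 (φ ρ : ℝ) (f : Fin 2 → ℝ) (q : Fin 2 → Fin 2 → ℝ)
    (hq0 : ∀ a b, 0 ≤ q a b) (hq1 : ∑ a, ∑ b, q a b = 1)
    (hm1 : q 1 0 + q 1 1 = sigmoid φ) (hm2 : q 0 1 + q 1 1 = sigmoid φ)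
    (hρ : ρ = (q 1 1 - sigmoid φ ^ 2) / (sigmoid φ * (1 - sigmoid φ)))
    (hρ1 : ρ < 1) :
    (∑ a, ∑ b, q a b *
        ((f a - f b) * (((a : ℕ) : ℝ) - ((b : ℕ) : ℝ)) / (2 * (1 - ρ))))
      = (f 1 - f 0) * (sigmoid φ * (1 - sigmoid φ))
    ∧ HasDerivAt (fun t : ℝ => sigmoid t * f 1 + (1 - sigmoid t) * f 0)
        ((f 1 - f 0) * (sigmoid φ * (1 - sigmoid φ))) φ :=
  stmt_7_general φ ρ f q hm1 hm2 hρ hρ1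
end

section
/- The variance of the ARTS estimator equals (Δf·p(1−p))²·(1/(2p(1−p)(1−ρ)) − 1), where Δf = f(1) − f(0), and this is an increasing function of ρ ∈ [−1, 1); hence for any ρ < 0, Var(ARTS) is strictly less than the variance of PoD with independent samples (ρ = 0). -/
/-- Variance of ARTS equals (Δf·p(1−p))²·(1/(2p(1−p)(1−ρ)) − 1), which is strictly
increasing in ρ on [−1, 1); hence for ρ < 0 it is strictly less than the ρ = 0 (PoD) case. -/
theorem stmt_9 (p ρ : ℝ) (hp : 0 < p) (hp1 : p < 1)
    (f : Fin 2 → ℝ) (hf : f 1 ≠ f 0)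
    (q : Fin 2 → Fin 2 → ℝ)
    (hq0 : ∀ a b, 0 ≤ q a b) (hq1 : ∑ a, ∑ b, q a b = 1)
    (hm1 : q 1 0 + q 1 1 = p) (hm2 : q 0 1 + q 1 1 = p)
    (hρ : ρ = (q 1 1 - p ^ 2) / (p * (1 - p)))
    (hρ1 : ρ < 1) (hρ2 : -1 ≤ ρ)
    (hbound : 2 * p * (1 - p) * (1 - ρ) ≤ 1) :
    (∑ a, ∑ b, q a b *
        ((f a - f b) * (((a : ℕ) : ℝ) - ((b : ℕ) : ℝ)) / (2 * (1 - ρ))) ^ 2)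
      - (∑ a, ∑ b, q a b *
        ((f a - f b) * (((a : ℕ) : ℝ) - ((b : ℕ) : ℝ)) / (2 * (1 - ρ)))) ^ 2
      = ((f 1 - f 0) * (p * (1 - p))) ^ 2 * (1 / (2 * p * (1 - p) * (1 - ρ)) - 1)
    ∧ StrictMonoOn
        (fun r : ℝ => ((f 1 - f 0) * (p * (1 - p))) ^ 2 *
          (1 / (2 * p * (1 - p) * (1 - r)) - 1)) (Set.Ico (-1 : ℝ) 1)
    ∧ (ρ < 0 →
        ((f 1 - f 0) * (p * (1 - p))) ^ 2 * (1 / (2 * p * (1 - p) * (1 - ρ)) - 1)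
          < ((f 1 - f 0) * (p * (1 - p))) ^ 2 * (1 / (2 * p * (1 - p) * (1 - 0)) - 1)) := by
  have hpne : p ≠ 0 := hp.ne'
  have hp1' : (0:ℝ) < 1 - p := by linarith
  have hp1ne : (1:ℝ) - p ≠ 0 := hp1'.ne'
  have hρpos : (0:ℝ) < 1 - ρ := by linarith
  have hρne : (1:ℝ) - ρ ≠ 0 := hρpos.ne'
  have hΔ : f 1 - f 0 ≠ 0 := sub_ne_zero.mpr hf
  have hq11 : q 1 1 = p ^ 2 + ρ * (p * (1 - p)) := by
    field_simp at hρ; linarith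
  have hq10 : q 1 0 = p * (1 - p) * (1 - ρ) := by nlinarith
  have hq01 : q 0 1 = p * (1 - p) * (1 - ρ) := by nlinarith
  have hC : (0:ℝ) < ((f 1 - f 0) * (p * (1 - p))) ^ 2 := by positivity
  have hmono : StrictMonoOn
      (fun r : ℝ => ((f 1 - f 0) * (p * (1 - p))) ^ 2 *
        (1 / (2 * p * (1 - p) * (1 - r)) - 1)) (Set.Ico (-1 : ℝ) 1) := by
    intro x hx y hy hxy
    have hx1 : (0:ℝ) < 1 - x := by linarith [hx.2]
    have hy1 : (0:ℝ) < 1 - y := by linarith [hy.2]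
    have hA : (0:ℝ) < 2 * p * (1 - p) * (1 - y) := by positivity
    have hlt : 2 * p * (1 - p) * (1 - y) < 2 * p * (1 - p) * (1 - x) := by nlinarith
    have : 1 / (2 * p * (1 - p) * (1 - x)) < 1 / (2 * p * (1 - p) * (1 - y)) :=
      one_div_lt_one_div_of_lt hA hlt
    have := sub_lt_sub_right this 1
    exact mul_lt_mul_of_pos_left this hC
  refine ⟨?_, hmono, ?_⟩
  · simp [Fin.sum_univ_two, hq10, hq01]
    field_simp
    ring
  · intro hρ0
    exact hmono ⟨hρ2, hρ1⟩ ⟨by norm_num, by norm_num⟩ hρ0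
end

section
/- ARMS is unbiased: if (b̃_1,…,b̃_n) are Bernoulli(σ(φ)) with equal pairwise correlations ρ < 1, then the expectation of (1/(n−1))·Σ_i (f(b̃_i) − (1/n)·Σ_j f(b̃_j))·(b̃_i − σ(φ))/(1−ρ) equals ∇_φ E_{b~Bern(σ(φ))}[f(b)]. -/
open Finset

/-- ARMS is unbiased: for n Bernoulli(σ(φ)) samples with equal pairwise correlations ρ < 1,
the ARMS estimator has expectation equal to the gradient (f(1) − f(0))·σ(φ)(1 − σ(φ)). -/
theorem stmt_12 (n : ℕ) (hn : 2 ≤ n) (φ ρ : ℝ) (f : Fin 2 → ℝ)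
    (q : (Fin n → Fin 2) → ℝ) (hq0 : ∀ b, 0 ≤ q b) (hq1 : ∑ b, q b = 1)
    (hmarg : ∀ i : Fin n,
      ∑ b ∈ Finset.univ.filter (fun b : Fin n → Fin 2 => b i = 1), q b = sigmoid φ)
    (hcorr : ∀ i j : Fin n, i ≠ j →
      ((∑ b ∈ Finset.univ.filter (fun b : Fin n → Fin 2 => b i = 1 ∧ b j = 1), q b)
          - sigmoid φ ^ 2) / (sigmoid φ * (1 - sigmoid φ)) = ρ)
    (hρ : ρ < 1) :
    ∑ b : Fin n → Fin 2, q b *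
      ((1 / (n - 1 : ℝ)) * ∑ i, (f (b i) - (1 / n : ℝ) * ∑ j, f (b j)) *
        ((((b i : ℕ)) : ℝ) - sigmoid φ) / (1 - ρ))
      = (f 1 - f 0) * (sigmoid φ * (1 - sigmoid φ)) := by
  set σ := sigmoid φ with hσdef
  have hexp : 0 < Real.exp (-φ) := Real.exp_pos _
  have hσ0 : 0 < σ := by
    rw [hσdef, sigmoid]; positivity
  have hσ1 : σ < 1 := by
    rw [hσdef, sigmoid, div_lt_one (by linarith)]; linarith
  have hρ' : (1:ℝ) - ρ ≠ 0 := by linarith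
  have hn2 : (2:ℝ) ≤ (n:ℝ) := by exact_mod_cast hn
  have hn1 : (n:ℝ) - 1 ≠ 0 := by linarith
  have hn0 : (n:ℝ) ≠ 0 := by linarith
  have hcases : ∀ x : Fin 2, x = 0 ∨ x = 1 := by decide
  -- first moments
  have hE1 : ∀ i : Fin n, ∑ b : Fin n → Fin 2, q b * ((b i : ℕ):ℝ) = σ := by
    intro i
    have h := hmarg i
    rw [Finset.sum_filter] at h
    rw [← h]
    refine Finset.sum_congr rfl fun b _ => ?_
    rcases hcases (b i) with hb | hb <;> rw [hb] <;> simp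
  -- second moments (off-diagonal)
  have hE2 : ∀ i j : Fin n, i ≠ j →
      ∑ b : Fin n → Fin 2, q b * (((b i : ℕ):ℝ) * ((b j : ℕ):ℝ))
        = σ^2 + ρ * (σ * (1-σ)) := by
    intro i j hij
    have hσσ : σ * (1-σ) ≠ 0 := ne_of_gt (mul_pos hσ0 (by linarith))
    have h := hcorr i j hij
    rw [div_eq_iff hσσ] at h
    have h2 : (∑ b ∈ Finset.univ.filter
        (fun b : Fin n → Fin 2 => b i = 1 ∧ b j = 1), q b) = σ^2 + ρ*(σ*(1-σ)) := by
      linarith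
    rw [Finset.sum_filter] at h2
    rw [← h2]
    refine Finset.sum_congr rfl fun b _ => ?_
    rcases hcases (b i) with hb | hb <;> rcases hcases (b j) with hb' | hb' <;>
      rw [hb, hb'] <;> simp
  -- pointwise rewrite of the estimator
  have hptwise : ∀ b : Fin n → Fin 2,
      (1 / (n - 1 : ℝ)) * ∑ i, (f (b i) - (1 / n : ℝ) * ∑ j, f (b j)) *
        ((((b i : ℕ)) : ℝ) - σ) / (1 - ρ)
      = (f 1 - f 0) / (((n:ℝ)-1)*(1-ρ)) *
          ((∑ j, ((b j : ℕ):ℝ)) - (∑ j, ((b j : ℕ):ℝ))^2 / n) := by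
    intro b
    set S := ∑ j, ((b j : ℕ):ℝ) with hS
    have hfval : ∀ j : Fin n, f (b j) = f 0 + (f 1 - f 0) * ((b j:ℕ):ℝ) := by
      intro j
      rcases hcases (b j) with h | h <;> rw [h] <;> simp
    have hsumf : ∑ j, f (b j) = n * f 0 + (f 1 - f 0) * S := by
      rw [Finset.sum_congr rfl fun j _ => hfval j, Finset.sum_add_distrib,
        ← Finset.mul_sum, Finset.sum_const, Finset.card_univ, Fintype.card_fin,
        nsmul_eq_mul, ← hS]
    have hterm : ∀ i : Fin n,
        (f (b i) - (1 / n : ℝ) * ∑ j, f (b j)) * ((((b i : ℕ)) : ℝ) - σ) / (1 - ρ)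
        = ((f 1 - f 0)/(1-ρ) * (1 - σ - S/n)) * ((b i:ℕ):ℝ)
            + (f 1 - f 0)/(1-ρ) * σ * S / n := by
      intro i
      rw [hsumf]
      rcases hcases (b i) with h | h <;> rw [h] <;>
        simp only [Fin.val_zero, Fin.val_one, Nat.cast_zero, Nat.cast_one] <;>
        field_simp <;> ring
    rw [Finset.sum_congr rfl fun i _ => hterm i, Finset.sum_add_distrib,
      ← Finset.mul_sum, Finset.sum_const, Finset.card_univ, Fintype.card_fin,
      nsmul_eq_mul, ← hS]
    field_simp
    ring
  -- moments of S
  have hM1 : ∑ b : Fin n → Fin 2, q b * (∑ j, ((b j : ℕ):ℝ)) = n * σ := by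
    calc ∑ b : Fin n → Fin 2, q b * (∑ j, ((b j : ℕ):ℝ))
        = ∑ b : Fin n → Fin 2, ∑ j, q b * ((b j : ℕ):ℝ) := by
          exact Finset.sum_congr rfl fun b _ => Finset.mul_sum _ _ _
      _ = ∑ j, ∑ b : Fin n → Fin 2, q b * ((b j : ℕ):ℝ) := Finset.sum_comm
      _ = ∑ _j : Fin n, σ := Finset.sum_congr rfl fun j _ => hE1 j
      _ = n * σ := by rw [Finset.sum_const, Finset.card_univ, Fintype.card_fin, nsmul_eq_mul]
  have hM2 : ∑ b : Fin n → Fin 2, q b * (∑ j, ((b j : ℕ):ℝ))^2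
      = n * σ + n * ((n:ℝ)-1) * (σ^2 + ρ*(σ*(1-σ))) := by
    calc ∑ b : Fin n → Fin 2, q b * (∑ j, ((b j : ℕ):ℝ))^2
        = ∑ b : Fin n → Fin 2, ∑ i, ∑ j, q b * (((b i : ℕ):ℝ) * ((b j : ℕ):ℝ)) := by
          refine Finset.sum_congr rfl fun b _ => ?_
          rw [sq, Finset.sum_mul_sum, Finset.mul_sum]
          exact Finset.sum_congr rfl fun i _ => by rw [Finset.mul_sum]
      _ = ∑ i, ∑ b : Fin n → Fin 2, ∑ j, q b * (((b i : ℕ):ℝ) * ((b j : ℕ):ℝ)) :=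
          Finset.sum_comm
      _ = ∑ i, ∑ j, ∑ b : Fin n → Fin 2, q b * (((b i : ℕ):ℝ) * ((b j : ℕ):ℝ)) :=
          Finset.sum_congr rfl fun i _ => Finset.sum_comm
      _ = ∑ _i : Fin n, (σ + ((n:ℝ)-1) * (σ^2 + ρ*(σ*(1-σ)))) := by
          refine Finset.sum_congr rfl fun i _ => ?_
          have hdiag : ∑ b : Fin n → Fin 2, q b * (((b i : ℕ):ℝ) * ((b i : ℕ):ℝ)) = σ := by
            rw [← hE1 i]
            refine Finset.sum_congr rfl fun b _ => ?_
            rcases hcases (b i) with hb | hb <;> rw [hb] <;> norm_num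
          rw [← Finset.sum_erase_add Finset.univ _ (Finset.mem_univ i)]
          have hoff : ∑ j ∈ Finset.univ.erase i,
              ∑ b : Fin n → Fin 2, q b * (((b i : ℕ):ℝ) * ((b j : ℕ):ℝ))
              = ∑ _j ∈ Finset.univ.erase i, (σ^2 + ρ*(σ*(1-σ))) :=
            Finset.sum_congr rfl fun j hj =>
              hE2 i j (Ne.symm (Finset.mem_erase.mp hj).1)
          rw [hoff, hdiag, Finset.sum_const, Finset.card_erase_of_mem (Finset.mem_univ i),
            Finset.card_univ, Fintype.card_fin, nsmul_eq_mul, Nat.cast_sub (by omega),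
            Nat.cast_one]
          ring
      _ = n * σ + n * ((n:ℝ)-1) * (σ^2 + ρ*(σ*(1-σ))) := by
          rw [Finset.sum_const, Finset.card_univ, Fintype.card_fin, nsmul_eq_mul]; ring
  -- put it all together
  calc ∑ b : Fin n → Fin 2, q b *
        ((1 / (n - 1 : ℝ)) * ∑ i, (f (b i) - (1 / n : ℝ) * ∑ j, f (b j)) *
          ((((b i : ℕ)) : ℝ) - σ) / (1 - ρ))
      = ∑ b : Fin n → Fin 2,
          ((f 1 - f 0) / (((n:ℝ)-1)*(1-ρ)) *
            (q b * (∑ j, ((b j : ℕ):ℝ)) - q b * (∑ j, ((b j : ℕ):ℝ))^2 / n)) := by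
        refine Finset.sum_congr rfl fun b _ => ?_
        rw [hptwise b]; ring
    _ = (f 1 - f 0) / (((n:ℝ)-1)*(1-ρ)) *
          ((∑ b : Fin n → Fin 2, q b * (∑ j, ((b j : ℕ):ℝ)))
            - (∑ b : Fin n → Fin 2, q b * (∑ j, ((b j : ℕ):ℝ))^2) / n) := by
        rw [← Finset.mul_sum, Finset.sum_sub_distrib, Finset.sum_div]
    _ = (f 1 - f 0) * (σ * (1-σ)) := by
        rw [hM1, hM2]
        field_simp
        ring
end

section
/- If d ~ Dir(1,…,1) in dimension n ≥ 3, then for any i ≠ j, the joint survival function satisfies P(d_i > q, d_j > q) = max(1 − 2q, 0)^{n−1} for q ∈ [0,1]. -/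
/-! Translating by `q • (eᵢ + eⱼ)` maps the region `{q < xᵢ, q < xⱼ}` of the unit simplex, up to the
null hyperplanes `xᵢ = q`, `xⱼ = q`, onto the simplex `{x ≥ 0, ∑ x ≤ 1 - 2q}`. The simplex `{x ≥ 0, ∑ x ≤ r}` in `ℝᵐ` has volume
`r ^ m / m!`, by induction on `m`, slicing along the first coordinate. -/

open MeasureTheory

def simplex (m : ℕ) (r : ℝ) : Set (Fin m → ℝ) := {x | 0 ≤ x ∧ ∑ k, x k ≤ r}

theorem measurableSet_simplex (m : ℕ) (r : ℝ) : MeasurableSet (simplex m r) :=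
  IsClosed.measurableSet <| (isClosed_le continuous_const continuous_id).inter <|
    isClosed_le (continuous_finsetSum _ fun k _ => continuous_apply k) continuous_const

theorem simplex_eq_empty_of_neg {m : ℕ} {r : ℝ} (hr : r < 0) : simplex m r = ∅ :=
  Set.eq_empty_of_forall_notMem fun _ ⟨hx, hsum⟩ =>
    (Finset.sum_nonneg fun k _ => hx k).not_gt (hsum.trans_lt hr)

theorem cons_mem_simplex_iff {m : ℕ} {r t : ℝ} {y : Fin m → ℝ} :
    (Fin.cons t y : Fin (m + 1) → ℝ) ∈ simplex (m + 1) r ↔ 0 ≤ t ∧ y ∈ simplex m (r - t) := by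
  simp only [simplex, Set.mem_ofPred_eq, Fin.sum_univ_succ, Fin.cons_zero, Fin.cons_succ,
    Pi.le_def, Fin.forall_fin_succ, Pi.zero_apply, le_sub_iff_add_le', and_assoc]

theorem volume_simplex_succ (m : ℕ) (r : ℝ) :
    volume (simplex (m + 1) r) = ∫⁻ t in Set.Icc 0 r, volume (simplex m (r - t)) := by
  have hcons := (volume_preserving_piFinSuccAbove (fun _ : Fin (m + 1) => ℝ) 0).symm
  rw [← hcons.measure_preimage (measurableSet_simplex _ _).nullMeasurableSet,
    Measure.volume_eq_prod, Measure.prod_apply (hcons.measurable (measurableSet_simplex _ _)),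
    ← lintegral_indicator measurableSet_Icc]
  refine lintegral_congr fun t => ?_
  have hslice : Prod.mk t ⁻¹' ((MeasurableEquiv.piFinSuccAbove (fun _ => ℝ) 0).symm ⁻¹'
      simplex (m + 1) r) = if 0 ≤ t then simplex m (r - t) else ∅ := by
    ext y
    simp only [Set.mem_preimage, MeasurableEquiv.piFinSuccAbove_symm_apply,
      Fin.insertNthEquiv_zero, Fin.consEquiv, Equiv.coe_fn_mk, cons_mem_simplex_iff]
    split_ifs with ht <;> simp [ht]
  rw [hslice]
  by_cases ht0 : 0 ≤ t
  · rcases le_or_gt t r with htr | htr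
    · simp [ht0, htr]
    · simp [ht0, htr.not_ge, simplex_eq_empty_of_neg (sub_neg.2 htr)]
  · simp [ht0]

theorem lintegral_Icc_sub_pow_div_factorial (m : ℕ) {r : ℝ} (hr : 0 ≤ r) :
    ∫⁻ t in Set.Icc 0 r, ENNReal.ofReal ((r - t) ^ m / m.factorial)
      = ENNReal.ofReal (r ^ (m + 1) / (m + 1).factorial) := by
  rw [← ofReal_integral_eq_lintegral_ofReal (by fun_prop : Continuous _).integrableOn_Icc
      (ae_restrict_of_forall_mem measurableSet_Icc fun t ht => by
        have := sub_nonneg.2 ht.2; positivity),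
    integral_Icc_eq_integral_Ioc, ← intervalIntegral.integral_of_le hr,
    intervalIntegral.integral_div, intervalIntegral.integral_comp_sub_left (· ^ m), integral_pow]
  push_cast [Nat.factorial_succ]
  field_simp
  simp

theorem volume_simplex (m : ℕ) {r : ℝ} (hr : 0 ≤ r) :
    volume (simplex m r) = ENNReal.ofReal (r ^ m / m.factorial) := by
  induction m generalizing r with
  | zero =>
    have : simplex 0 r = Set.univ := by ext x; simp [simplex, hr]
    simp [this, volume_pi]
  | succ m ih =>
    rw [volume_simplex_succ, ← lintegral_Icc_sub_pow_div_factorial m hr]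
    exact setLIntegral_congr_fun measurableSet_Icc fun t ht => ih (sub_nonneg.2 ht.2)

theorem factorial_mul_volume_simplex {m : ℕ} (hm : m ≠ 0) (r : ℝ) :
    (m.factorial : ENNReal) * volume (simplex m r) = ENNReal.ofReal (max r 0 ^ m) := by
  rcases le_or_gt 0 r with hr | hr
  · rw [volume_simplex m hr, max_eq_left hr, ← ENNReal.ofReal_natCast,
      ← ENNReal.ofReal_mul (by positivity), mul_div_cancel₀ _ (by positivity)]
  · rw [simplex_eq_empty_of_neg hr, measure_empty, mul_zero, max_eq_right hr.le, zero_pow hm,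
      ENNReal.ofReal_zero]

theorem volume_shifted_simplex {m : ℕ} (c : Fin m → ℝ) (r : ℝ) :
    volume {x | c ≤ x ∧ ∑ k, x k ≤ r} = volume (simplex m (r - ∑ k, c k)) := by
  rw [← measure_preimage_add_right volume c]
  congr 1
  ext x
  simp [simplex, Finset.sum_add_distrib, le_sub_iff_add_le]

theorem volume_inter_lt_apply {ι : Type*} [Fintype ι] (s : Set (ι → ℝ)) (i : ι) (a : ℝ) :
    volume (s ∩ {x | a < x i}) = volume (s ∩ {x | a ≤ x i}) := by
  refine measure_congr ((Filter.EventuallyEq.refl _ s).inter ?_)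
  filter_upwards [Measure.ae_eval_ne (fun _ => volume) i a] with x hx
  exact propext hx.symm.le_iff_lt.symm

theorem simplex_inter_le_apply_inter_le_apply {m : ℕ} {i j : Fin m} (hij : i ≠ j) {q : ℝ}
    (hq : 0 ≤ q) (r : ℝ) :
    simplex m r ∩ {x | q ≤ x i} ∩ {x | q ≤ x j}
      = {x | Pi.single i q + Pi.single j q ≤ x ∧ ∑ k, x k ≤ r} := by
  ext x
  simp only [simplex, Set.mem_inter_iff, Set.mem_ofPred_eq, Pi.le_def, Pi.add_apply]
  constructor
  · rintro ⟨⟨⟨hx, hsum⟩, hi⟩, hj⟩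
    refine ⟨fun k => ?_, hsum⟩
    rcases eq_or_ne k i with rfl | hki
    · simpa [hij] using hi
    rcases eq_or_ne k j with rfl | hkj
    · simpa [hki] using hj
    simpa [hki, hkj] using hx k
  · rintro ⟨hx, hsum⟩
    have hc : (0 : Fin m → ℝ) ≤ Pi.single i q + Pi.single j q :=
      add_nonneg (Pi.single_nonneg.2 hq) (Pi.single_nonneg.2 hq)
    exact ⟨⟨⟨fun k => (hc k).trans (hx k), hsum⟩, by simpa [hij] using hx i⟩,
      by simpa [hij.symm] using hx j⟩

theorem stmt_15_general (n : ℕ) (i j : Fin (n - 1)) (hij : i ≠ j)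
    (q : ℝ) (hq : q ∈ Set.Icc (0 : ℝ) 1) :
    ((Nat.factorial (n - 1) : ENNReal)) * MeasureTheory.volume
        {x : Fin (n - 1) → ℝ | (∀ k, 0 ≤ x k) ∧ ∑ k, x k ≤ 1 ∧ q < x i ∧ q < x j}
      = ENNReal.ofReal ((max (1 - 2 * q) 0) ^ (n - 1)) := by
  have hS : {x : Fin (n - 1) → ℝ | (∀ k, 0 ≤ x k) ∧ ∑ k, x k ≤ 1 ∧ q < x i ∧ q < x j}
      = simplex (n - 1) 1 ∩ {x | q < x i} ∩ {x | q < x j} := by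
    ext x
    simp [simplex, Pi.le_def, and_assoc]
  have hsum : ∑ k, (Pi.single i q + Pi.single j q : Fin (n - 1) → ℝ) k = 2 * q := by
    simp [Finset.sum_add_distrib, two_mul]
  rw [hS, volume_inter_lt_apply, Set.inter_right_comm, volume_inter_lt_apply,
    Set.inter_right_comm, simplex_inter_le_apply_inter_le_apply hij hq.1, volume_shifted_simplex,
    hsum, factorial_mul_volume_simplex (Fin.pos i).ne']

/-- For d ~ Dir(1,…,1) in dimension n ≥ 3 (parameterized by its first n−1 coordinates with
density (n−1)!), the joint survival function satisfies P(dᵢ > q, dⱼ > q) = max(1−2q, 0)^{n−1}. -/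
theorem stmt_15 (n : ℕ) (hn : 3 ≤ n) (i j : Fin (n - 1)) (hij : i ≠ j)
    (q : ℝ) (hq : q ∈ Set.Icc (0 : ℝ) 1) :
    ((Nat.factorial (n - 1) : ENNReal)) * MeasureTheory.volume
        {x : Fin (n - 1) → ℝ | (∀ k, 0 ≤ x k) ∧ ∑ k, x k ≤ 1 ∧ q < x i ∧ q < x j}
      = ENNReal.ofReal ((max (1 - 2 * q) 0) ^ (n - 1)) :=
  stmt_15_general n i j hij q hq
end

section
/- For the Dirichlet copula sample ũ_i = 1 − (1−d_i)^{n−1} with d ~ Dir(1_n), the transformed Bernoulli variables b̃_i = 1{ũ_i < p} have common pairwise correlation ρ = (max(0, 2(1−p)^{1/(n−1)} − 1)^{n−1} − (1−p)²)/(p(1−p)). -/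
/-!
The first `m = n - 1` coordinates of `d ~ Dir(1ₙ)` are uniform on the simplex
`{x ≥ 0, ∑ x ≤ 1}`, with density `m!`, and `ũᵢ < p ↔ xᵢ < q` for `q = 1 - (1 - p)^{1/m}`.
By inclusion–exclusion the joint event has mass `1 - 2 P(xᵢ ≥ q) + P(xᵢ ≥ q, xⱼ ≥ q)`, and each
of these events is a translated simplex `{x ≥ v, ∑ x ≤ 1}`, of volume `max 0 (1 - ∑ v)^m / m!`.
With `v = q eᵢ` and `v = q (eᵢ + eⱼ)` this gives `1 - 2(1 - p) + max 0 (1 - 2q)^m`.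
-/

open MeasureTheory Set
open scoped Nat ENNReal

theorem integral_Icc_sub_pow_div_factorial (m : ℕ) {t : ℝ} (ht : 0 ≤ t) :
    ∫ s in Icc 0 t, (t - s) ^ m / m ! = t ^ (m + 1) / (m + 1)! := by
  rw [integral_Icc_eq_integral_Ioc, ← intervalIntegral.integral_of_le ht,
    intervalIntegral.integral_div, intervalIntegral.integral_comp_sub_left (· ^ m), integral_pow,
    Nat.factorial_succ]
  push_cast
  field_simp
  ring

def cornerSimplex {ι : Type*} [Fintype ι] (v : ι → ℝ) (t : ℝ) : Set (ι → ℝ) :=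
  {x | (∀ k, v k ≤ x k) ∧ ∑ k, x k ≤ t}

section cornerSimplex

variable {ι : Type*} [Fintype ι]

theorem cornerSimplex_eq_empty {v : ι → ℝ} {t : ℝ} (ht : t < ∑ k, v k) :
    cornerSimplex v t = ∅ :=
  eq_empty_of_forall_notMem fun _ ⟨hvx, hxt⟩ =>
    (ht.trans_le (Finset.sum_le_sum fun k _ => hvx k)).not_ge hxt

theorem cornerSimplex_eq_preimage_add (v : ι → ℝ) (t : ℝ) :
    cornerSimplex v t = (fun x => -v + x) ⁻¹' cornerSimplex 0 (t - ∑ k, v k) := by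
  ext x
  simp only [cornerSimplex, mem_preimage, mem_ofPred_eq, Pi.add_apply, Pi.neg_apply,
    Pi.zero_apply, Finset.sum_add_distrib, Finset.sum_neg_distrib, le_neg_add_iff_add_le,
    add_zero]
  constructor <;> rintro ⟨h, hs⟩ <;> exact ⟨h, by linarith⟩

theorem cornerSimplex_inter_setOf_le {v : ι → ℝ} {t a : ℝ} [DecidableEq ι] {i : ι}
    (h : v i ≤ a) :
    cornerSimplex v t ∩ {x | a ≤ x i} = cornerSimplex (Function.update v i a) t := by
  ext x
  simp only [cornerSimplex, mem_inter_iff, mem_ofPred_eq]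
  rw [Function.forall_update_iff v (p := fun k b => b ≤ x k)]
  constructor
  · rintro ⟨⟨hv, hs⟩, ha⟩
    exact ⟨⟨ha, fun k _ => hv k⟩, hs⟩
  · rintro ⟨⟨ha, hv⟩, hs⟩
    refine ⟨⟨fun k => ?_, hs⟩, ha⟩
    by_cases hk : k = i
    · exact hk ▸ h.trans ha
    · exact hv k hk

theorem volume_cornerSimplex_zero (m : ℕ) {t : ℝ} (ht : 0 ≤ t) :
    volume (cornerSimplex (0 : Fin m → ℝ) t) = ENNReal.ofReal (t ^ m / m !) := by
  induction m generalizing t with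
  | zero =>
    have : cornerSimplex (0 : Fin 0 → ℝ) t = univ := by simp [cornerSimplex, ht]
    rw [this, volume_pi, Measure.pi_univ]
    simp
  | succ m ih =>
    let T : Set (ℝ × (Fin m → ℝ)) := {p | 0 ≤ p.1 ∧ p.2 ∈ cornerSimplex 0 (t - p.1)}
    have hT : MeasurableSet T := by
      simp only [T, cornerSimplex]
      measurability
    have hpre : cornerSimplex (0 : Fin (m + 1) → ℝ) t =
        MeasurableEquiv.piFinSuccAbove (fun _ => ℝ) 0 ⁻¹' T := by
      ext x
      simp only [cornerSimplex, T, mem_preimage, mem_ofPred_eq, Fin.forall_fin_succ,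
        Fin.sum_univ_succ, Pi.zero_apply, le_sub_iff_add_le']
      exact and_assoc
    have hslice : ∀ s, volume (Prod.mk s ⁻¹' T) =
        indicator (Icc 0 t) (fun s => ENNReal.ofReal ((t - s) ^ m / m !)) s := by
      intro s
      by_cases hs : s ∈ Icc 0 t
      · have : Prod.mk s ⁻¹' T = cornerSimplex 0 (t - s) := by
          ext y; simp [T, hs.1]
        rw [this, ih (sub_nonneg.2 hs.2), indicator_of_mem hs]
      · rw [indicator_of_notMem hs]
        rcases not_and_or.1 hs with hs | hs
        · convert measure_empty (μ := volume)
          ext y; simp [T, hs]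
        · have : Prod.mk s ⁻¹' T ⊆ cornerSimplex 0 (t - s) := fun y hy => hy.2
          rw [cornerSimplex_eq_empty (by simpa using sub_neg.2 (not_le.1 hs))] at this
          exact measure_mono_null this measure_empty
    rw [hpre, (volume_preserving_piFinSuccAbove (fun _ => ℝ) 0).measure_preimage
      hT.nullMeasurableSet, Measure.volume_eq_prod, Measure.prod_apply hT,
      lintegral_congr hslice, lintegral_indicator measurableSet_Icc,
      ← ofReal_integral_eq_lintegral_ofReal, integral_Icc_sub_pow_div_factorial m ht]
    · exact (by fun_prop : Continuous fun s : ℝ => (t - s) ^ m / m !).integrableOn_Icc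
    · exact (ae_restrict_iff' measurableSet_Icc).2 (.of_forall fun s hs =>
        div_nonneg (pow_nonneg (sub_nonneg.2 hs.2) m) (Nat.cast_nonneg _))

theorem measureReal_cornerSimplex {m : ℕ} (hm : m ≠ 0) (v : Fin m → ℝ) (t : ℝ) :
    volume.real (cornerSimplex v t) = max 0 (t - ∑ k, v k) ^ m / m ! := by
  rw [cornerSimplex_eq_preimage_add, measureReal_def, measure_preimage_add]
  rcases le_or_gt 0 (t - ∑ k, v k) with h | h
  · rw [volume_cornerSimplex_zero m h, max_eq_right h,
      ENNReal.toReal_ofReal (by positivity)]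
  · rw [cornerSimplex_eq_empty (by simpa using h), max_eq_left h.le, zero_pow hm]
    simp

end cornerSimplex

theorem measureReal_sdiff_union {α : Type*} [MeasurableSpace α] {μ : Measure α}
    {s t u : Set α} (ht : MeasurableSet t) (hu : MeasurableSet u) (hs : μ s ≠ ⊤) :
    μ.real (s \ (t ∪ u)) =
      μ.real s - μ.real (s ∩ t) - μ.real (s ∩ u) + μ.real (s ∩ t ∩ u) := by
  have hfin : ∀ w ⊆ s, μ w ≠ ⊤ := fun w hw => measure_ne_top_of_subset hw hs
  have h₁ := measureReal_sdiff_add_inter (ht.union hu) hs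
  have h₂ := measureReal_inter_add_sdiff ht (hfin (s ∩ (t ∪ u)) inter_subset_left)
  have h₃ := measureReal_inter_add_sdiff ht (hfin (s ∩ u) inter_subset_left)
  have e₁ : s ∩ (t ∪ u) ∩ t = s ∩ t := by ext; simp +contextual
  have e₂ : (s ∩ (t ∪ u)) \ t = (s ∩ u) \ t := by ext; simp +contextual [or_iff_right_of_imp]
  rw [e₁, e₂] at h₂
  rw [inter_right_comm] at h₃
  linarith

theorem one_sub_one_sub_pow_lt_iff {a p : ℝ} {m : ℕ} (hm : m ≠ 0) (ha : a ≤ 1) (hp : p ≤ 1) :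
    1 - (1 - a) ^ m < p ↔ a < 1 - (1 - p) ^ (m : ℝ)⁻¹ := by
  set r := (1 - p) ^ (m : ℝ)⁻¹
  have hr : r ^ m = 1 - p := Real.rpow_inv_natCast_pow (by linarith) hm
  rw [sub_lt_comm, lt_sub_comm, ← pow_lt_pow_iff_left₀ (a := r) (by positivity) (by linarith) hm,
    hr]

theorem toReal_factorial_mul_volume_copula_lt {m : ℕ} {i j : Fin m} (hij : i ≠ j)
    {p : ℝ} (hp : 0 < p) (hp1 : p < 1) :
    ((m ! : ℝ≥0∞) * volume
        {x : Fin m → ℝ | (∀ k, 0 ≤ x k) ∧ ∑ k, x k ≤ 1 ∧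
          1 - (1 - x i) ^ m < p ∧ 1 - (1 - x j) ^ m < p}).toReal
      = 2 * p - 1 + max 0 (2 * (1 - p) ^ (m : ℝ)⁻¹ - 1) ^ m := by
  have hm : m ≠ 0 := (Fin.pos i).ne'
  set r := (1 - p) ^ (m : ℝ)⁻¹
  have hr : r ^ m = 1 - p := Real.rpow_inv_natCast_pow (by linarith) hm
  have hr0 : 0 ≤ r := by positivity
  have hrq : 0 ≤ 1 - r := by
    rw [sub_nonneg]; exact Real.rpow_le_one (by linarith) (by linarith) (by positivity)
  have hevent : {x : Fin m → ℝ | (∀ k, 0 ≤ x k) ∧ ∑ k, x k ≤ 1 ∧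
      1 - (1 - x i) ^ m < p ∧ 1 - (1 - x j) ^ m < p} =
      cornerSimplex 0 1 \ ({x | 1 - r ≤ x i} ∪ {x | 1 - r ≤ x j}) := by
    ext x
    simp only [cornerSimplex, mem_ofPred_eq, mem_sdiff, mem_union, not_or, not_le,
      Pi.zero_apply, and_assoc]
    refine and_congr_right fun hx => and_congr_right fun hsum => ?_
    have hle : ∀ l, x l ≤ 1 := fun l =>
      (Finset.single_le_sum (fun k _ => hx k) (Finset.mem_univ l)).trans hsum
    rw [one_sub_one_sub_pow_lt_iff hm (hle i) hp1.le,
      one_sub_one_sub_pow_lt_iff hm (hle j) hp1.le]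
  rw [hevent, ENNReal.toReal_mul, ← measureReal_def,
    measureReal_sdiff_union (measurableSet_le measurable_const (measurable_pi_apply i))
      (measurableSet_le measurable_const (measurable_pi_apply j))
      (by rw [volume_cornerSimplex_zero m zero_le_one]; exact ENNReal.ofReal_ne_top)]
  have hsum_i : ∑ k, Function.update (0 : Fin m → ℝ) i (1 - r) k = 1 - r := by
    simp [Finset.sum_update_of_mem]
  have hsum_j : ∑ k, Function.update (0 : Fin m → ℝ) j (1 - r) k = 1 - r := by
    simp [Finset.sum_update_of_mem]
  have hsum_ij :
      ∑ k, Function.update (Function.update (0 : Fin m → ℝ) i (1 - r)) j (1 - r) k =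
        (1 - r) + (1 - r) := by
    simp [Finset.sum_update_of_mem, hij]
  rw [cornerSimplex_inter_setOf_le (i := i) (by simpa using hrq),
    cornerSimplex_inter_setOf_le (i := j) (by simpa using hrq),
    cornerSimplex_inter_setOf_le (i := j) (by simpa [hij.symm] using hrq)]
  simp only [measureReal_cornerSimplex hm, hsum_i, hsum_j, hsum_ij, Pi.zero_apply,
    Finset.sum_const_zero, sub_zero, sub_sub_cancel, max_eq_right zero_le_one, max_eq_right hr0,
    hr, one_pow, ENNReal.toReal_natCast, show 1 - ((1 - r) + (1 - r)) = 2 * r - 1 by ring]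
  field_simp
  ring

theorem stmt_16_general (n : ℕ) (i j : Fin (n - 1)) (hij : i ≠ j)
    (p : ℝ) (hp : 0 < p) (hp1 : p < 1) :
    ((((Nat.factorial (n - 1) : ENNReal)) * MeasureTheory.volume
          {x : Fin (n - 1) → ℝ | (∀ k, 0 ≤ x k) ∧ ∑ k, x k ≤ 1 ∧
            1 - (1 - x i) ^ (n - 1) < p ∧ 1 - (1 - x j) ^ (n - 1) < p}).toReal - p ^ 2)
        / (p * (1 - p))
      = ((max 0 (2 * (1 - p) ^ ((n - 1 : ℝ)⁻¹) - 1)) ^ (n - 1) - (1 - p) ^ 2)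
          / (p * (1 - p)) := by
  have hn : 1 ≤ n := by have := Fin.pos i; omega
  have hcast : (n - 1 : ℝ) = ((n - 1 : ℕ) : ℝ) := by rw [Nat.cast_sub hn, Nat.cast_one]
  rw [hcast, toReal_factorial_mul_volume_copula_lt hij hp hp1]
  ring

/-- For the Dirichlet copula sample ũᵢ = 1 − (1−dᵢ)^{n−1} with d ~ Dir(1ₙ), the Bernoulli
variables b̃ᵢ = 1{ũᵢ < p} have common pairwise correlation
ρ = (max(0, 2(1−p)^{1/(n−1)} − 1)^{n−1} − (1−p)²)/(p(1−p)). -/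
theorem stmt_16 (n : ℕ) (hn : 3 ≤ n) (i j : Fin (n - 1)) (hij : i ≠ j)
    (p : ℝ) (hp : 0 < p) (hp1 : p < 1) :
    ((((Nat.factorial (n - 1) : ENNReal)) * MeasureTheory.volume
          {x : Fin (n - 1) → ℝ | (∀ k, 0 ≤ x k) ∧ ∑ k, x k ≤ 1 ∧
            1 - (1 - x i) ^ (n - 1) < p ∧ 1 - (1 - x j) ^ (n - 1) < p}).toReal - p ^ 2)
        / (p * (1 - p))
      = ((max 0 (2 * (1 - p) ^ ((n - 1 : ℝ)⁻¹) - 1)) ^ (n - 1) - (1 - p) ^ 2)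
          / (p * (1 - p)) :=
  stmt_16_general n i j hij p hp hp1
end

section
/- For the antithetic Dirichlet copula sample ũ'_i = (1−d_i)^{n−1} with d ~ Dir(1_n), one has P(ũ'_i < p, ũ'_j < p) = max(0, 2p^{1/(n−1)} − 1)^{n−1} for i ≠ j, giving Bernoulli correlation ρ' = (max(0, 2p^{1/(n−1)} − 1)^{n−1} − p²)/(p(1−p)). -/
open MeasureTheory Set

lemma simplex_vol (m : ℕ) (c : ℝ) (hc : 0 ≤ c) :
    volume {x : Fin m → ℝ | (∀ k, 0 ≤ x k) ∧ ∑ k, x k ≤ c}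
      = ENNReal.ofReal (c ^ m / m.factorial) := by
  induction m generalizing c with
  | zero =>
    have h : {x : Fin 0 → ℝ | (∀ k, 0 ≤ x k) ∧ ∑ k, x k ≤ c} = Set.univ := by
      ext x; simp [hc]
    rw [h, MeasureTheory.volume_pi, Measure.pi_univ]
    simp
  | succ m ih =>
    have hmp := MeasureTheory.volume_preserving_piFinSuccAbove (fun _ : Fin (m+1) => ℝ) 0
    set e := MeasurableEquiv.piFinSuccAbove (fun _ : Fin (m+1) => ℝ) 0 with he
    set E : Set (ℝ × (Fin m → ℝ)) :=
      {q | 0 ≤ q.1 ∧ (∀ k, 0 ≤ q.2 k) ∧ q.1 + ∑ k, q.2 k ≤ c} with hEdef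
    have hE : MeasurableSet E := by
      have h1 : MeasurableSet {q : ℝ × (Fin m → ℝ) | 0 ≤ q.1} :=
        measurableSet_le measurable_const measurable_fst
      have h2 : MeasurableSet {q : ℝ × (Fin m → ℝ) | ∀ k, 0 ≤ q.2 k} := by
        rw [Set.setOf_forall]
        exact MeasurableSet.iInter fun k =>
          measurableSet_le measurable_const (measurable_snd.eval)
      have h3 : MeasurableSet {q : ℝ × (Fin m → ℝ) | q.1 + ∑ k, q.2 k ≤ c} :=
        measurableSet_le (measurable_fst.add
          (Finset.measurable_sum _ fun k _ => measurable_snd.eval))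
          measurable_const
      exact h1.inter (h2.inter h3)
    have hSE : {x : Fin (m+1) → ℝ | (∀ k, 0 ≤ x k) ∧ ∑ k, x k ≤ c} = e ⁻¹' E := by
      ext x
      simp only [Set.mem_setOf_eq, Set.mem_preimage, hEdef, he,
        MeasurableEquiv.piFinSuccAbove_apply, Fin.sum_univ_succ, Fin.succAbove_zero]
      constructor
      · rintro ⟨h1, h2⟩
        exact ⟨h1 0, fun k => h1 k.succ, h2⟩
      · rintro ⟨h1, h2, h3⟩
        refine ⟨fun k => ?_, h3⟩
        rcases Fin.eq_zero_or_eq_succ k with rfl | ⟨k', rfl⟩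
        · exact h1
        · exact h2 k'
    rw [hSE, hmp.measure_preimage hE.nullMeasurableSet, Measure.volume_eq_prod, Measure.prod_apply hE]
    have slice : ∀ t : ℝ, volume (Prod.mk t ⁻¹' E)
        = Set.indicator (Icc (0:ℝ) c)
            (fun t => ENNReal.ofReal ((c - t) ^ m / m.factorial)) t := by
      intro t
      by_cases ht : t ∈ Icc (0:ℝ) c
      · rw [Set.indicator_of_mem ht]
        have h2 : Prod.mk t ⁻¹' E
            = {y : Fin m → ℝ | (∀ k, 0 ≤ y k) ∧ ∑ k, y k ≤ c - t} := by
          ext y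
          simp only [Set.mem_preimage, hEdef, Set.mem_setOf_eq]
          constructor
          · rintro ⟨_, h2, h3⟩; exact ⟨h2, by linarith⟩
          · rintro ⟨h2, h3⟩; exact ⟨ht.1, h2, by linarith⟩
        rw [h2, ih _ (by linarith [ht.2])]
      · rw [Set.indicator_of_notMem ht]
        have h2 : Prod.mk t ⁻¹' E = ∅ := by
          ext y
          simp only [Set.mem_preimage, hEdef, Set.mem_setOf_eq, Set.mem_empty_iff_false,
            iff_false, not_and]
          intro h1 h2
          have hs : 0 ≤ ∑ k, y k := Finset.sum_nonneg fun k _ => h2 k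
          simp only [Set.mem_Icc, not_and, not_le] at ht
          have := ht h1
          linarith
        simp [h2]
    simp_rw [slice]
    rw [lintegral_indicator measurableSet_Icc]
    have hcont : Continuous fun t : ℝ => (c - t) ^ m / (m.factorial : ℝ) := by fun_prop
    have hint : IntegrableOn (fun t : ℝ => (c - t) ^ m / (m.factorial : ℝ)) (Icc 0 c) :=
      hcont.integrableOn_Icc
    have hnn : 0 ≤ᵐ[volume.restrict (Icc (0:ℝ) c)]
        fun t : ℝ => (c - t) ^ m / (m.factorial : ℝ) := by
      filter_upwards [self_mem_ae_restrict measurableSet_Icc] with t ht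
      have : (0:ℝ) ≤ c - t := by linarith [ht.2]
      positivity
    rw [← ofReal_integral_eq_lintegral_ofReal hint hnn]
    congr 1
    rw [MeasureTheory.integral_Icc_eq_integral_Ioc, ← intervalIntegral.integral_of_le hc,
      intervalIntegral.integral_div]
    rw [intervalIntegral.integral_comp_sub_left (fun s : ℝ => s ^ m) c]
    simp only [sub_self, sub_zero, integral_pow, zero_pow (Nat.succ_ne_zero m)]
    rw [Nat.factorial_succ]
    push_cast
    have hm : (m.factorial : ℝ) ≠ 0 := by positivity
    field_simp

lemma dirichlet_antithetic_pair (m : ℕ) (hm0 : m ≠ 0) (i j : Fin m) (hij : i ≠ j)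
    (p : ℝ) (hp : 0 < p) (hp1 : p < 1) :
    ((Nat.factorial m : ENNReal)) * volume
        {x : Fin m → ℝ | (∀ k, 0 ≤ x k) ∧ ∑ k, x k ≤ 1 ∧
          (1 - x i) ^ m < p ∧ (1 - x j) ^ m < p}
      = ENNReal.ofReal ((max 0 (2 * p ^ ((m : ℝ)⁻¹) - 1)) ^ m) := by
  set r := p ^ ((m : ℝ)⁻¹) with hrdef
  have hr0 : 0 < r := Real.rpow_pos_of_pos hp _
  have hr1 : r < 1 := Real.rpow_lt_one hp.le hp1 (by positivity)
  have hrm : r ^ m = p := by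
    rw [hrdef, ← Real.rpow_natCast (p ^ ((m:ℝ)⁻¹)) m, ← Real.rpow_mul hp.le,
      inv_mul_cancel₀ (by exact_mod_cast hm0 : (m:ℝ) ≠ 0), Real.rpow_one]
  set q := 1 - r with hqdef
  have hq0 : 0 < q := by simp [hqdef]; linarith
  have hq1 : q < 1 := by simp [hqdef]; linarith
  have key : ∀ (x : Fin m → ℝ), (∀ k, 0 ≤ x k) → ∑ k, x k ≤ 1 →
      ∀ l : Fin m, ((1 - x l) ^ m < p ↔ q < x l) := by
    intro x h0 hs l
    have hx1 : x l ≤ 1 :=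
      le_trans (Finset.single_le_sum (fun k _ => h0 k) (Finset.mem_univ l)) hs
    rw [← hrm, pow_lt_pow_iff_left₀ (by linarith) hr0.le hm0]
    constructor <;> intro h <;> simp only [hqdef] at * <;> linarith
  have hAeq : {x : Fin m → ℝ | (∀ k, 0 ≤ x k) ∧ ∑ k, x k ≤ 1 ∧
        (1 - x i) ^ m < p ∧ (1 - x j) ^ m < p}
      = {x : Fin m → ℝ | (∀ k, 0 ≤ x k) ∧ ∑ k, x k ≤ 1 ∧ q < x i ∧ q < x j} := by
    ext x
    simp only [Set.mem_setOf_eq]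
    constructor
    · rintro ⟨h0, hs, hi, hj⟩
      exact ⟨h0, hs, (key x h0 hs i).1 hi, (key x h0 hs j).1 hj⟩
    · rintro ⟨h0, hs, hi, hj⟩
      exact ⟨h0, hs, (key x h0 hs i).2 hi, (key x h0 hs j).2 hj⟩
  rw [hAeq]
  by_cases hq : 1 ≤ 2 * q
  · -- empty case
    have hempty : {x : Fin m → ℝ | (∀ k, 0 ≤ x k) ∧ ∑ k, x k ≤ 1 ∧ q < x i ∧ q < x j}
        = ∅ := by
      ext x
      simp only [Set.mem_setOf_eq, Set.mem_empty_iff_false, iff_false, not_and]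
      intro h0 hs hi hj
      have hpair : x i + x j ≤ ∑ k, x k := by
        rw [← Finset.sum_pair hij]
        exact Finset.sum_le_sum_of_subset_of_nonneg (Finset.subset_univ _)
          (fun k _ _ => h0 k)
      linarith
    rw [hempty]
    have hmax : max 0 (2 * r - 1) = 0 := max_eq_left (by simp [hqdef] at hq; linarith)
    simp [hmax, zero_pow hm0]
  · push_neg at hq
    set c := 1 - 2 * q with hcdef
    have hc0 : 0 < c := by simp [hcdef]; linarith
    set v : Fin m → ℝ := fun k => if k = i ∨ k = j then q else 0 with hvdef
    have hvi : v i = q := if_pos (Or.inl rfl)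
    have hvj : v j = q := if_pos (Or.inr rfl)
    have hvsum : ∑ k, v k = 2 * q := by
      have h1 : ∑ k, v k = ∑ k ∈ ({i, j} : Finset (Fin m)), v k := by
        refine (Finset.sum_subset (Finset.subset_univ _) fun k _ hk => ?_).symm
        simp only [Finset.mem_insert, Finset.mem_singleton] at hk
        push_neg at hk
        exact if_neg (by tauto)
      rw [h1, Finset.sum_pair hij, hvi, hvj]; ring
    set T : Set (Fin m → ℝ) := {y | (∀ k, 0 ≤ y k) ∧ ∑ k, y k ≤ c} with hTdef
    set T' : Set (Fin m → ℝ) :=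
      {y | (∀ k, k ≠ i → k ≠ j → 0 ≤ y k) ∧ 0 < y i ∧ 0 < y j ∧ ∑ k, y k ≤ c} with hT'def
    have hprei : {x : Fin m → ℝ | (∀ k, 0 ≤ x k) ∧ ∑ k, x k ≤ 1 ∧ q < x i ∧ q < x j}
        = (fun x => x + (-v)) ⁻¹' T' := by
      ext x
      simp only [Set.mem_setOf_eq, Set.mem_preimage, hT'def, Pi.add_apply, Pi.neg_apply]
      have hsum : ∑ k, (x k + -v k) = ∑ k, x k - 2 * q := by
        rw [Finset.sum_add_distrib, Finset.sum_neg_distrib, hvsum]; ring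
      constructor
      · rintro ⟨h0, hs, hi, hj⟩
        refine ⟨fun k hki hkj => ?_, ?_, ?_, ?_⟩
        · have hz : v k = 0 := if_neg (by tauto)
          simp [hz, h0 k]
        · simp [hvi]; linarith
        · simp [hvj]; linarith
        · rw [hsum]; simp only [hcdef]; linarith
      · rintro ⟨h0, hi, hj, hs⟩
        simp only [hvi] at hi
        simp only [hvj] at hj
        rw [hsum] at hs
        simp only [hcdef] at hs
        refine ⟨fun k => ?_, by linarith, by linarith, by linarith⟩
        by_cases hki : k = i
        · subst hki; linarith
        by_cases hkj : k = j
        · subst hkj; linarith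
        · have hz : v k = 0 := if_neg (by tauto)
          have h0k := h0 k hki hkj
          rw [hz] at h0k
          linarith
    have hvolT' : volume T' = volume T := by
      have hN1 : volume {y : Fin m → ℝ | y i = 0} = 0 := by
        rw [MeasureTheory.volume_pi]
        exact MeasureTheory.Measure.pi_hyperplane _ i 0
      have hN2 : volume {y : Fin m → ℝ | y j = 0} = 0 := by
        rw [MeasureTheory.volume_pi]
        exact MeasureTheory.Measure.pi_hyperplane _ j 0
      apply le_antisymm
      · apply measure_mono
        rintro y ⟨h0, hi, hj, hs⟩
        refine ⟨fun k => ?_, hs⟩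
        by_cases hki : k = i
        · subst hki; linarith
        by_cases hkj : k = j
        · subst hkj; linarith
        · exact h0 k hki hkj
      · calc volume T ≤ volume (T' ∪ ({y : Fin m → ℝ | y i = 0}
            ∪ {y : Fin m → ℝ | y j = 0})) := by
              apply measure_mono
              rintro y ⟨h0, hs⟩
              by_cases hyi : y i = 0
              · exact Or.inr (Or.inl hyi)
              by_cases hyj : y j = 0
              · exact Or.inr (Or.inr hyj)
              · exact Or.inl ⟨fun k _ _ => h0 k,
                  lt_of_le_of_ne (h0 i) (Ne.symm hyi),
                  lt_of_le_of_ne (h0 j) (Ne.symm hyj), hs⟩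
        _ ≤ volume T' + volume ({y : Fin m → ℝ | y i = 0}
            ∪ {y : Fin m → ℝ | y j = 0}) := measure_union_le _ _
        _ = volume T' := by
              rw [measure_union_null hN1 hN2]
              simp
    have hvolT : volume T = ENNReal.ofReal (c ^ m / m.factorial) :=
      simplex_vol m c hc0.le
    rw [hprei, measure_preimage_add_right volume (-v) T', hvolT', hvolT]
    have hmax : max 0 (2 * r - 1) = c := by
      rw [max_eq_right (by simp only [hcdef, hqdef] at *; linarith)]
      simp only [hcdef, hqdef]; ring
    rw [hmax, ← ENNReal.ofReal_natCast, ← ENNReal.ofReal_mul (by positivity)]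
    congr 1
    have hf : (m.factorial : ℝ) ≠ 0 := by positivity
    field_simp

/-- For the antithetic Dirichlet copula sample ũ'ᵢ = (1−dᵢ)^{n−1} with d ~ Dir(1ₙ),
P(ũ'ᵢ < p, ũ'ⱼ < p) = max(0, 2p^{1/(n−1)} − 1)^{n−1}, giving Bernoulli correlation
ρ' = (max(0, 2p^{1/(n−1)} − 1)^{n−1} − p²)/(p(1−p)). -/
theorem stmt_17 (n : ℕ) (hn : 3 ≤ n) (i j : Fin (n - 1)) (hij : i ≠ j)
    (p : ℝ) (hp : 0 < p) (hp1 : p < 1) :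
    ((Nat.factorial (n - 1) : ENNReal)) * MeasureTheory.volume
        {x : Fin (n - 1) → ℝ | (∀ k, 0 ≤ x k) ∧ ∑ k, x k ≤ 1 ∧
          (1 - x i) ^ (n - 1) < p ∧ (1 - x j) ^ (n - 1) < p}
      = ENNReal.ofReal ((max 0 (2 * p ^ ((n - 1 : ℝ)⁻¹) - 1)) ^ (n - 1))
    ∧ ((((Nat.factorial (n - 1) : ENNReal)) * MeasureTheory.volume
          {x : Fin (n - 1) → ℝ | (∀ k, 0 ≤ x k) ∧ ∑ k, x k ≤ 1 ∧
            (1 - x i) ^ (n - 1) < p ∧ (1 - x j) ^ (n - 1) < p}).toReal - p ^ 2)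
        / (p * (1 - p))
      = ((max 0 (2 * p ^ ((n - 1 : ℝ)⁻¹) - 1)) ^ (n - 1) - p ^ 2) / (p * (1 - p)) := by
  have hcast : ((n : ℝ) - 1) = ((n - 1 : ℕ) : ℝ) := by
    rw [Nat.cast_sub (by omega)]; simp
  have main := dirichlet_antithetic_pair (n - 1) (by omega) i j hij p hp hp1
  rw [hcast] at *
  constructor
  · exact main
  · rw [main, ENNReal.toReal_ofReal (by positivity)]
end
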